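/- arXiv:1011.1611 — 2 statements merged into one kernel-verified Lean document; each statement's English description precedes it below -/
import Mathlib

section
/- If X admits a covering by a small loop space, then the small loop group π₁ˢ(X,x) is a normal subgroup of π₁(X,x) for every x ∈ X. -/
open CategoryTheory Topology

attribute [local instance] Path.Homotopic.setoid

noncomputable section

variable {X Y E : Type*} [TopologicalSpace X] [TopologicalSpace Y] [TopologicalSpace E]

/-- Build an element of the fundamental group from a homotopy class of loops. -/
def fromLoop {x : X} (p : Path.Homotopic.Quotient x x) : FundamentalGroup X x :=
  FundamentalGroup.fromPath p

/-- The homotopy class of loops underlying an element of the fundamental group. -/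
def toLoop {x : X} (γ : FundamentalGroup X x) : Path.Homotopic.Quotient x x :=
  FundamentalGroup.toPath γ

/-- A fundamental group element is *small* if it has a loop representative inside every
neighborhood of the basepoint. -/
def IsSmall {x : X} (γ : FundamentalGroup X x) : Prop :=
  ∀ U ∈ nhds x, ∃ δ : Path x x, (∀ t, δ t ∈ U) ∧ fromLoop ⟦δ⟧ = γ

/-- The set of small loop classes, i.e. the carrier of the small loop group `π₁ˢ(X,x)`. -/
def smallSet (X : Type*) [TopologicalSpace X] (x : X) : Set (FundamentalGroup X x) :=
  {γ | IsSmall γ}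

/-- Conjugate of a loop class at `y` by a path `α` from `x` to `y`: `α * β * α⁻¹`. -/
def conjPath {x y : X} (α : Path x y) (β : FundamentalGroup X y) : FundamentalGroup X x :=
  fromLoop (Path.Homotopic.Quotient.trans
    (Path.Homotopic.Quotient.trans (⟦α⟧ : Path.Homotopic.Quotient x y) (toLoop β))
    (⟦α.symm⟧ : Path.Homotopic.Quotient y x))

/-- The SG subgroup `π₁ˢᵍ(X,x)`: generated by conjugates of small loop classes. -/
def sgSubgroup (X : Type*) [TopologicalSpace X] (x : X) : Subgroup (FundamentalGroup X x) :=
  Subgroup.closure {g | ∃ (y : X) (α : Path x y) (β : FundamentalGroup X y), IsSmall β ∧ g = conjPath α β}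

/-- The map induced on fundamental groups by a continuous map. -/
def piMap (f : C(X, Y)) (x : X) (γ : FundamentalGroup X x) : FundamentalGroup Y (f x) :=
  fromLoop (Path.Homotopic.Quotient.map (toLoop γ) f)

/-- A small loop space: a path-connected, non-simply connected space all of whose loops
are small. -/
def IsSmallLoopSpace (X : Type*) [TopologicalSpace X] : Prop :=
  PathConnectedSpace X ∧ ¬ SimplyConnectedSpace X ∧
    ∀ (x : X) (γ : FundamentalGroup X x), IsSmall γ

/-- A space is homotopically Hausdorff if every nontrivial loop class can be kept away from
some neighborhood of its basepoint. -/
def HomotopicallyHausdorff (X : Type*) [TopologicalSpace X] : Prop :=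
  ∀ (x : X) (γ : FundamentalGroup X x), γ ≠ 1 →
    ∃ U ∈ nhds x, ∀ δ : Path x x, (∀ t, δ t ∈ U) → fromLoop ⟦δ⟧ ≠ γ

/-- The image of `π₁(U,y) → π₁(X,y)`: classes of loops having a representative inside `U`. -/
def loopsIn (U : Set X) (y : X) : Set (FundamentalGroup X y) :=
  {γ | ∃ δ : Path y y, (∀ t, δ t ∈ U) ∧ fromLoop ⟦δ⟧ = γ}

/-- A semi-locally small loop space. -/
def SemiLocallySmallLoop (X : Type*) [TopologicalSpace X] : Prop :=
  ∀ x : X, ∃ U : Set X, IsOpen U ∧ x ∈ U ∧ ∀ y ∈ U, loopsIn U y = smallSet X y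

/-! The conjugate of a small class `[δ]` at `x` by `[a]` is represented by `a⁻¹ · δ · a`, the
projection of the loop `Γ · δ' · Γ⁻¹` of `E`, where `Γ` lifts `a⁻¹` and `δ'` lifts `δ` at the
endpoint of `Γ`. Such a `δ'` exists because `δ` may be chosen inside an evenly covered
neighbourhood of `x`. Every loop of `E` is small and continuous maps preserve smallness, so the
conjugate is small. -/

namespace Path

variable {x₀ x₁ x₂ : X} {y₀ y₁ y₂ : Y} {f : X → Y}

theorem comp_symm_eq_symm {Γ : Path x₀ x₁} {a : Path y₀ y₁} (h : f ∘ Γ = a) :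
    f ∘ Γ.symm = a.symm :=
  funext fun t => congr_fun h (unitInterval.symm t)

theorem comp_trans_eq_trans {Γ : Path x₀ x₁} {Γ' : Path x₁ x₂} {a : Path y₀ y₁}
    {a' : Path y₁ y₂} (h : f ∘ Γ = a) (h' : f ∘ Γ' = a') : f ∘ Γ.trans Γ' = a.trans a' := by
  funext t
  simp only [Function.comp_apply, Path.trans_apply]
  split_ifs
  exacts [congr_fun h _, congr_fun h' _]

end Path

theorem isSmall_one (x : X) : IsSmall (1 : FundamentalGroup X x) :=
  fun _ hU => ⟨Path.refl x, fun _ => mem_of_mem_nhds hU, rfl⟩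

theorem IsSmall.mul {x : X} {γ₁ γ₂ : FundamentalGroup X x} (h₁ : IsSmall γ₁) (h₂ : IsSmall γ₂) :
    IsSmall (γ₁ * γ₂) := by
  intro U hU
  obtain ⟨δ₁, hδ₁U, rfl⟩ := h₁ U hU
  obtain ⟨δ₂, hδ₂U, rfl⟩ := h₂ U hU
  refine ⟨δ₂.trans δ₁, fun t => ?_, rfl⟩
  obtain ⟨s, hs⟩ | ⟨s, hs⟩ := (Path.trans_range δ₂ δ₁).subset (Set.mem_range_self t)
  · exact hs ▸ hδ₂U s
  · exact hs ▸ hδ₁U s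

theorem IsSmall.inv {x : X} {γ : FundamentalGroup X x} (h : IsSmall γ) : IsSmall γ⁻¹ := by
  intro U hU
  obtain ⟨δ, hδU, rfl⟩ := h U hU
  exact ⟨δ.symm, fun t => hδU _, rfl⟩

def smallSubgroup (X : Type*) [TopologicalSpace X] (x : X) : Subgroup (FundamentalGroup X x) where
  carrier := smallSet X x
  one_mem' := isSmall_one x
  mul_mem' := IsSmall.mul
  inv_mem' := IsSmall.inv

theorem IsSmall.piMap {x : X} {γ : FundamentalGroup X x} (h : IsSmall γ) (f : C(X, Y)) :
    IsSmall (piMap f x γ) := by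
  intro U hU
  obtain ⟨δ, hδU, rfl⟩ := h (f ⁻¹' U) (f.continuous.continuousAt.preimage_mem_nhds hU)
  exact ⟨δ.map f.continuous, hδU, rfl⟩

theorem isSmall_of_comp_eq {f : C(E, X)} {e : E} {L : Path e e}
    (hL : IsSmall (fromLoop ⟦L⟧)) {M : Path (f e) (f e)} (h : f ∘ L = M) :
    IsSmall (fromLoop ⟦M⟧) := by
  obtain rfl : L.map f.continuous = M := Path.ext h
  exact hL.piMap f

theorem Bundle.Trivialization.exists_loop_lift {F : Type*} [TopologicalSpace F] {p : E → X}
    (T : Trivialization F p) {x : X} (δ : Path x x) (hδ : ∀ t, δ t ∈ T.baseSet) {e : E}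
    (he : p e = x) : ∃ δ' : Path e e, p ∘ δ' = δ := by
  subst he
  have hend : T.toOpenPartialHomeomorph.symm (p e, (T e).2) = e :=
    T.symm_apply_mk_proj (T.mem_source.mpr (δ.source ▸ hδ 0))
  refine ⟨⟨⟨fun t => T.toOpenPartialHomeomorph.symm (δ t, (T e).2),
    T.continuousOn_symm_prodMk_left.comp_continuous δ.continuous hδ⟩, ?_, ?_⟩,
    funext fun t => T.proj_symm_apply' (hδ t)⟩
  all_goals simpa using hend

namespace IsCoveringMap

variable {p : E → X}

theorem exists_path_lift (hp : IsCoveringMap p) {x y : X} (a : Path x y) {e : E} (he : p e = x) :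
    ∃ (e' : E) (Γ : Path e e'), p ∘ Γ = a :=
  have ha : a 0 = p e := a.source.trans he.symm
  let Γ := hp.liftPath a e ha
  ⟨Γ 1, ⟨Γ, hp.liftPath_zero a e ha, rfl⟩, hp.liftPath_lifts a e ha⟩

theorem surjective [PathConnectedSpace X] [Nonempty E] (hp : IsCoveringMap p) :
    Function.Surjective p := by
  intro x
  obtain ⟨e⟩ := ‹Nonempty E›
  obtain ⟨e', Γ, hΓ⟩ := hp.exists_path_lift (PathConnectedSpace.somePath (p e) x) rfl
  exact ⟨e', by simpa using congr_fun hΓ 1⟩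

theorem exists_loop_lift_of_isSmall (hp : IsCoveringMap p) {x : X} {γ : FundamentalGroup X x}
    (hγ : IsSmall γ) {e : E} (he : p e = x) :
    ∃ δ : Path x x, fromLoop ⟦δ⟧ = γ ∧ ∃ δ' : Path e e, p ∘ δ' = δ := by
  have : Nonempty (p ⁻¹' {x}) := ⟨⟨e, he⟩⟩
  let T := (hp x).toTrivialization
  obtain ⟨δ, hδT, hδ⟩ := hγ T.baseSet (T.open_baseSet.mem_nhds (hp x).mem_toTrivialization_baseSet)
  exact ⟨δ, hδ, T.exists_loop_lift δ hδT he⟩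

theorem isSmall_conj {p : C(E, X)} (hp : IsCoveringMap p)
    (hE : ∀ (e : E) (γ : FundamentalGroup E e), IsSmall γ) {e₀ : E}
    {γ : FundamentalGroup X (p e₀)} (hγ : IsSmall γ) (g : FundamentalGroup X (p e₀)) :
    IsSmall (g * γ * g⁻¹) := by
  -- `fromLoop ⟦u.trans v⟧ = fromLoop ⟦v⟧ * fromLoop ⟦u⟧`: the group law reverses concatenation.
  obtain ⟨a, ha⟩ := Quotient.exists_rep (toLoop g)
  obtain rfl : fromLoop ⟦a⟧ = g := congrArg fromLoop ha
  obtain ⟨e₁, Γ, hΓ⟩ := hp.exists_path_lift a.symm rfl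
  have he₁ : p e₁ = p e₀ := by simpa using congr_fun hΓ 1
  obtain ⟨δ, rfl, δ', hδ'⟩ := hp.exists_loop_lift_of_isSmall hγ he₁
  have hΓ' : p ∘ Γ.symm = a := by simpa only [Path.symm_symm] using Path.comp_symm_eq_symm hΓ
  exact isSmall_of_comp_eq (L := Γ.trans (δ'.trans Γ.symm)) (hE _ _)
    (Path.comp_trans_eq_trans hΓ (Path.comp_trans_eq_trans hδ' hΓ'))

end IsCoveringMap

/-- if `X` admits a covering by a small loop space, then `π₁ˢ(X,x)` is a normal
subgroup of `π₁(X,x)` for every `x ∈ X`. -/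
theorem smallSet_normal_of_small_covering {E X : Type*} [TopologicalSpace E]
    [TopologicalSpace X] [PathConnectedSpace X] (p : C(E, X)) (hp : IsCoveringMap p)
    (hE : IsSmallLoopSpace E) :
    ∀ x : X, ∃ H : Subgroup (FundamentalGroup X x),
      H.Normal ∧ (H : Set (FundamentalGroup X x)) = smallSet X x := by
  obtain ⟨_, -, hEsmall⟩ := hE
  intro x
  obtain ⟨e₀, rfl⟩ := hp.surjective x
  exact ⟨smallSubgroup X (p e₀), ⟨fun γ hγ g => hp.isSmall_conj hEsmall hγ g⟩, rfl⟩

end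
end

section
/- Let X be a path-connected semi-locally small loop space. If there exist a point x ∈ X and a covering p : X̃ → X with p(x̃) = x and p₋(π₁(X̃, x̃)) = π₁ˢ(X,x), then X̃ is a small loop space (every loop in X̃ is small). -/
open CategoryTheory Topology

attribute [local instance] Path.Homotopic.setoid

noncomputable section

variable {X Y E : Type*} [TopologicalSpace X] [TopologicalSpace Y] [TopologicalSpace E]

/-!
Smallness of loop classes in a semi-locally small loop space survives change of basepoint. If a
path `α` lies in a neighbourhood `U` whose loops are exactly the small ones, a small class at its
end has a representative `δ` inside `U`, so `α δ α⁻¹` is a loop in `U` and hence small. Along an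
arbitrary path `γ`, whether conjugation by the subpath `γ|[0,t]` preserves smallness is therefore
locally constant in `t`, hence holds at `t = 1`.

Given a loop `γ` at `e` upstairs, transport it to `x̃`: its image is small by hypothesis, so `p₊γ`
is small at `p e`. A representative of `p₊γ` close to `p e` lifts through a local inverse of `p`
to a loop close to `e`, which is homotopic to `γ` because `p₊` is injective on path classes.
-/

open Set

section Conjugation

variable {x y z : X}

lemma toLoop_conjPath (α : Path x y) (β : FundamentalGroup X y) :
    toLoop (conjPath α β) =
      ((Path.Homotopic.Quotient.mk α).trans (toLoop β)).trans (Path.Homotopic.Quotient.mk α.symm) :=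
  rfl

lemma conjPath_refl (β : FundamentalGroup X x) : conjPath (Path.refl x) β = β := by
  change toLoop (conjPath (Path.refl x) β) = toLoop β
  simp [toLoop_conjPath, Path.refl_symm]

lemma conjPath_trans (α : Path x y) (α' : Path y z) (β : FundamentalGroup X z) :
    conjPath (α.trans α') β = conjPath α (conjPath α' β) := by
  change toLoop (conjPath _ β) = toLoop (conjPath α _)
  simp [toLoop_conjPath, Path.trans_symm]

lemma conjPath_symm_conjPath (α : Path x y) (β : FundamentalGroup X y) :
    conjPath α.symm (conjPath α β) = β := by
  change toLoop (conjPath _ _) = toLoop β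
  simp only [toLoop_conjPath, Path.symm_symm, Path.Homotopic.Quotient.mk_symm,
    Path.Homotopic.Quotient.trans_assoc]
  rw [← Path.Homotopic.Quotient.trans_assoc, Path.Homotopic.Quotient.symm_trans,
    Path.Homotopic.Quotient.refl_trans, Path.Homotopic.Quotient.trans_refl]

lemma conjPath_congr {α α' : Path x y} (h : α.Homotopic α') (β : FundamentalGroup X y) :
    conjPath α β = conjPath α' β := by
  change toLoop (conjPath _ _) = toLoop (conjPath _ _)
  rw [toLoop_conjPath, toLoop_conjPath, Path.Homotopic.Quotient.eq.2 h,
    Path.Homotopic.Quotient.eq.2 h.symm₂]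

lemma piMap_conjPath (f : C(X, Y)) (α : Path x y) (β : FundamentalGroup X y) :
    piMap f x (conjPath α β) = conjPath (α.map f.continuous) (piMap f y β) := by
  obtain ⟨b, rfl⟩ := Path.Homotopic.Quotient.mk_surjective β
  change Path.Homotopic.Quotient.mk (((α.trans b).trans α.symm).map f.continuous) = _
  rw [Path.map_trans, Path.map_trans, ← Path.map_symm]
  rfl

def ConjPreservesSmall (α : Path x y) : Prop :=
  ∀ β : FundamentalGroup X y, IsSmall β → IsSmall (conjPath α β)

lemma conjPreservesSmall_refl (x : X) : ConjPreservesSmall (Path.refl x) := by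
  intro β hβ
  rwa [conjPath_refl]

lemma ConjPreservesSmall.trans {α : Path x y} {α' : Path y z} (h : ConjPreservesSmall α)
    (h' : ConjPreservesSmall α') : ConjPreservesSmall (α.trans α') := by
  intro β hβ
  rw [conjPath_trans]
  exact h _ (h' β hβ)

lemma ConjPreservesSmall.of_homotopic {α α' : Path x y} (h : ConjPreservesSmall α)
    (hα : α.Homotopic α') : ConjPreservesSmall α' := by
  intro β hβ
  rw [← conjPath_congr hα]
  exact h β hβ

lemma conjPreservesSmall_cast_iff {x' y' : X} (α : Path x y) (hx : x' = x) (hy : y' = y) :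
    ConjPreservesSmall (α.cast hx hy) ↔ ConjPreservesSmall α := by
  subst hx hy
  rfl

lemma conjPreservesSmall_of_range_subset {U : Set X} (hUo : IsOpen U)
    (hU : ∀ y ∈ U, loopsIn U y = smallSet X y) {α : Path x y} (hα : range α ⊆ U) :
    ConjPreservesSmall α := by
  intro β hβ
  have hx : x ∈ U := α.source ▸ hα (mem_range_self 0)
  have hy : y ∈ U := α.target ▸ hα (mem_range_self 1)
  obtain ⟨δ, hδU, rfl⟩ := hβ U (hUo.mem_nhds hy)
  have hrange : range ((α.trans δ).trans α.symm) ⊆ U := by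
    rw [Path.trans_range, Path.trans_range, Path.symm_range]
    exact union_subset (union_subset hα (range_subset_iff.2 hδU)) hα
  have hmem : conjPath α (fromLoop ⟦δ⟧) ∈ loopsIn U x :=
    ⟨(α.trans δ).trans α.symm, fun t => hrange (mem_range_self t), rfl⟩
  rw [hU x hx] at hmem
  exact hmem

theorem SemiLocallySmallLoop.conjPreservesSmall (hX : SemiLocallySmallLoop X) (γ : Path x y) :
    ConjPreservesSmall γ := by
  have hloc : IsLocallyConstant fun t => ConjPreservesSmall (γ.subpath 0 t) := by
    refine (IsLocallyConstant.iff_eventually_eq _).2 fun t₀ => ?_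
    obtain ⟨U, hUo, hγU, hU⟩ := hX (γ t₀)
    filter_upwards [ordConnectedComponent_mem_nhds.2
      ((hUo.preimage γ.continuous).mem_nhds hγU)] with t ht
    have hsub : γ '' uIcc t₀ t ⊆ U := image_subset_iff.2 ht
    have hfwd := conjPreservesSmall_of_range_subset hUo hU
      ((γ.range_subpath t₀ t).trans_subset hsub)
    have hbwd := conjPreservesSmall_of_range_subset hUo hU
      ((γ.range_subpath t t₀).trans_subset (uIcc_comm t t₀ ▸ hsub))
    exact propext
      ⟨fun h => (h.trans hbwd).of_homotopic ⟨Path.Homotopy.subpathTransSubpath γ _ _ _⟩,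
        fun h => (h.trans hfwd).of_homotopic ⟨Path.Homotopy.subpathTransSubpath γ _ _ _⟩⟩
  have h01 := hloc.apply_eq_of_preconnectedSpace 1 0
  simp only [Path.subpath_zero_one, Path.subpath_self] at h01
  rw [conjPreservesSmall_cast_iff] at h01
  exact h01 ▸ conjPreservesSmall_refl _

end Conjugation

section CoveringLift

variable {p : E → X}

lemma IsLocalHomeomorph.exists_nhds_lift_loop (hp : IsLocalHomeomorph p) {e : E} {V : Set E}
    (hV : V ∈ 𝓝 e) : ∃ W ∈ 𝓝 (p e), ∀ δ : Path (p e) (p e), (∀ t, δ t ∈ W) →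
      ∃ δ' : Path e e, (∀ t, δ' t ∈ V) ∧ δ'.map hp.continuous = δ := by
  obtain ⟨φ, he, rfl⟩ := hp e
  have hW : φ '' (V ∩ φ.source) ∈ 𝓝 (φ e) :=
    φ.image_mem_nhds he (Filter.inter_mem hV (φ.open_source.mem_nhds he))
  refine ⟨_, hW, fun δ hδ => ?_⟩
  have hδt : ∀ t, δ t ∈ φ.target := fun t => by
    obtain ⟨v, hv, hvδ⟩ := hδ t
    exact hvδ ▸ φ.map_source hv.2
  refine ⟨⟨⟨φ.symm ∘ δ, φ.continuousOn_symm.comp_continuous δ.continuous hδt⟩, ?_, ?_⟩,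
    fun t => ?_, ?_⟩
  · simp [φ.left_inv he]
  · simp [φ.left_inv he]
  · obtain ⟨v, hv, hvδ⟩ := hδ t
    simp [← hvδ, φ.left_inv hv.2, hv.1]
  · ext t
    exact φ.right_inv (hδt t)

lemma IsCoveringMap.isSmall_of_isSmall_piMap {p : C(E, X)} (hp : IsCoveringMap p) {e : E}
    {γ : FundamentalGroup E e} (hγ : IsSmall (piMap p e γ)) : IsSmall γ := by
  intro V hV
  obtain ⟨W, hW, hlift⟩ := hp.isLocalHomeomorph.exists_nhds_lift_loop hV
  obtain ⟨δ, hδW, hδ⟩ := hγ W hW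
  obtain ⟨δ', hδ'V, hδ'⟩ := hlift δ hδW
  refine ⟨δ', hδ'V, hp.injective_path_homotopic_map e e ?_⟩
  change Path.Homotopic.Quotient.mk (δ'.map p.continuous) = _
  rw [hδ']
  exact hδ

end CoveringLift

theorem covering_is_small_of_range_eq_smallSet_general {E X : Type*} [TopologicalSpace E]
    [TopologicalSpace X] [PathConnectedSpace E]
    (hX : SemiLocallySmallLoop X) (p : C(E, X)) (hp : IsCoveringMap p) (xt : E)
    (himg : Set.range (piMap p xt) = smallSet X (p xt)) :
    ∀ (e : E) (γ : FundamentalGroup E e), IsSmall γ := by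
  intro e γ
  let a : Path xt e := PathConnectedSpace.somePath xt e
  have hsmall : piMap p xt (conjPath a γ) ∈ smallSet X (p xt) := himg ▸ mem_range_self _
  rw [piMap_conjPath] at hsmall
  refine hp.isSmall_of_isSmall_piMap ?_
  rw [← conjPath_symm_conjPath (a.map p.continuous) (piMap p e γ)]
  exact hX.conjPreservesSmall _ _ hsmall

/-- if `X` is a path-connected semi-locally small loop space and some covering
`p : X̃ → X` satisfies `p₋(π₁(X̃,xt)) = π₁ˢ(X, p xt)` at one point, then every loop in `X̃` is
small. -/
theorem covering_is_small_of_range_eq_smallSet {E X : Type*} [TopologicalSpace E]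
    [TopologicalSpace X] [PathConnectedSpace X] [PathConnectedSpace E]
    (hX : SemiLocallySmallLoop X) (p : C(E, X)) (hp : IsCoveringMap p) (xt : E)
    (himg : Set.range (piMap p xt) = smallSet X (p xt)) :
    ∀ (e : E) (γ : FundamentalGroup E e), IsSmall γ :=
  covering_is_small_of_range_eq_smallSet_general hX p hp xt himg
end
end
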